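/- arXiv:1310.0904 — 4 statements merged into one kernel-verified Lean document; each statement's English description precedes it below -/
import Mathlib

section
/- (Sylvester–Gallai) Given a finite set S of points in the real plane R^2, either all points of S are collinear, or there exist two points of S such that the line through them contains no other point of S. -/
/-!
Kelly's proof. Among all pairs of a point `p` of `S` and a line `L` through two points of `S`
missing `p`, choose one minimising the distance from `p` to `L`. If `L` contained a third point
of `S`, two of these three points, `x` and `y`, would lie on the same side of the foot `q` of the
perpendicular from `p` to `L`, with `x` between `q` and `y`. Then `x` is strictly closer to the
line `py` than `p` is to `L`, contradicting minimality.

Collinearity and lines are affine notions, so the Euclidean metric may be borrowed from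
`ℂ ≃ ℝ × ℝ` (the metric of `ℝ × ℝ` itself is the sup metric).
-/

open Metric EuclideanGeometry AffineMap
open scoped RealInnerProductSpace

def HasOrdinaryLine (k : Type*) {V P : Type*} [Ring k] [AddCommGroup V] [Module k V]
    [AddTorsor V P] (S : Set P) : Prop :=
  ∃ a ∈ S, ∃ b ∈ S, a ≠ b ∧ ∀ c ∈ S, c ∈ line[k, a, b] → c = a ∨ c = b

section Affine

variable {k V P V₂ P₂ : Type*} [Field k] [AddCommGroup V] [Module k V] [AddTorsor V P]
  [AddCommGroup V₂] [Module k V₂] [AddTorsor V₂ P₂]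

theorem AffineMap.map_mem_affineSpan_pair (f : P →ᵃ[k] P₂) {a b c : P}
    (h : c ∈ line[k, a, b]) : f c ∈ line[k, f a, f b] := by
  obtain ⟨r, rfl⟩ := mem_affineSpan_pair_iff_exists_lineMap_eq.1 h
  exact mem_affineSpan_pair_iff_exists_lineMap_eq.2 ⟨r, (f.apply_lineMap a b r).symm⟩

theorem collinear_of_subset_affineSpan_pair {s : Set P} {a b : P} (h : s ⊆ line[k, a, b]) :
    Collinear k s := by
  refine (Submodule.rank_mono ?_).trans (collinear_pair k a b)
  simpa [← AffineSubspace.direction_eq_vectorSpan, direction_affineSpan] using vectorSpan_mono k h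

theorem exists_notMem_affineSpan_pair_of_not_collinear {s : Set P} (h : ¬Collinear k s) :
    ∃ p ∈ s, ∃ a ∈ s, ∃ b ∈ s, a ≠ b ∧ p ∉ line[k, a, b] := by
  by_contra! hs
  rcases s.subsingleton_or_nontrivial with hsub | ⟨a, ha, b, hb, hab⟩
  · exact h (hsub.induction_on (collinear_empty k P) (collinear_singleton k))
  · exact h (collinear_of_subset_affineSpan_pair fun p hp => hs p hp a ha b hb hab)

theorem notMem_affineSpan_pair_of_notMem {L : AffineSubspace k P} {p x y : P} (hp : p ∉ L)
    (hx : x ∈ L) (hy : y ∈ L) (hxy : x ≠ y) : x ∉ line[k, p, y] := by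
  intro hxM
  have hcol : Collinear k ({x, y, p} : Set P) :=
    collinear_triple_of_mem_affineSpan_pair hxM (right_mem_affineSpan_pair k p y)
      (left_mem_affineSpan_pair k p y)
  exact hp (affineSpan_pair_le_of_mem_of_mem hx hy
    (hcol.mem_affineSpan_of_mem_of_ne (by simp) (by simp) (by simp) hxy))

theorem AffineEquiv.collinear_image_iff (e : P ≃ᵃ[k] P₂) {s : Set P} :
    Collinear k (e '' s) ↔ Collinear k s := by
  rw [Collinear, Collinear, ← Cardinal.lift_le_one_iff,
    ← Cardinal.lift_le_one_iff (a := Module.rank k _),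
    show (e '' s) = (e : P →ᵃ[k] P₂) '' s from rfl, ← AffineMap.map_vectorSpan]
  exact e.linear.lift_rank_map_eq _ ▸ Iff.rfl

theorem HasOrdinaryLine.of_image (e : P ≃ᵃ[k] P₂) {S : Set P}
    (h : HasOrdinaryLine k (e '' S)) : HasOrdinaryLine k S := by
  obtain ⟨_, ⟨a, ha, rfl⟩, _, ⟨b, hb, rfl⟩, hab, hline⟩ := h
  refine ⟨a, ha, b, hb, ne_of_apply_ne e hab, fun c hc hcL => ?_⟩
  simpa using
    hline (e c) (Set.mem_image_of_mem e hc) (e.toAffineMap.map_mem_affineSpan_pair hcL)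

end Affine

section Ordered

variable {R V P : Type*} [Field R] [LinearOrder R] [IsStrictOrderedRing R] [AddCommGroup V]
  [Module R V] [AddTorsor V P]

theorem wbtw_or_wbtw_smul_vadd_of_mul_nonneg (q : P) (v : V) {r₁ r₂ : R} (h : 0 ≤ r₁ * r₂) :
    Wbtw R q (r₁ • v +ᵥ q) (r₂ • v +ᵥ q) ∨ Wbtw R q (r₂ • v +ᵥ q) (r₁ • v +ᵥ q) := by
  rcases mul_nonneg_iff.1 h with ⟨h₁, h₂⟩ | ⟨h₁, h₂⟩
  exacts [wbtw_or_wbtw_smul_vadd_of_nonneg q v h₁ h₂, wbtw_or_wbtw_smul_vadd_of_nonpos q v h₁ h₂]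

theorem exists_wbtw_of_collinear {q a b c : P} (h : Collinear R ({q, a, b, c} : Set P))
    (hab : a ≠ b) (hac : a ≠ c) (hbc : b ≠ c) :
    ∃ x ∈ ({a, b, c} : Set P), ∃ y ∈ ({a, b, c} : Set P), x ≠ y ∧ Wbtw R q x y := by
  obtain ⟨v, hv⟩ := (collinear_iff_of_mem (Set.mem_insert q _)).1 h
  obtain ⟨ra, rfl⟩ := hv a (by simp)
  obtain ⟨rb, rfl⟩ := hv b (by simp)
  obtain ⟨rc, rfl⟩ := hv c (by simp)
  set T : Set P := {ra • v +ᵥ q, rb • v +ᵥ q, rc • v +ᵥ q}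
  have pair_of_mul_nonneg : ∀ r₁ r₂ : R, 0 ≤ r₁ * r₂ → r₁ • v +ᵥ q ∈ T → r₂ • v +ᵥ q ∈ T →
      r₁ • v +ᵥ q ≠ r₂ • v +ᵥ q → ∃ x ∈ T, ∃ y ∈ T, x ≠ y ∧ Wbtw R q x y := by
    intro r₁ r₂ h h₁ h₂ hne
    rcases wbtw_or_wbtw_smul_vadd_of_mul_nonneg q v h with hw | hw
    exacts [⟨_, h₁, _, h₂, hne, hw⟩, ⟨_, h₂, _, h₁, hne.symm, hw⟩]
  have sameSide : 0 ≤ ra * rb ∨ 0 ≤ ra * rc ∨ 0 ≤ rb * rc := by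
    by_contra! hneg
    nlinarith [mul_self_nonneg (ra * rb * rc), mul_pos_of_neg_of_neg hneg.1 hneg.2.1]
  rcases sameSide with h | h | h
  · exact pair_of_mul_nonneg _ _ h (by simp [T]) (by simp [T]) hab
  · exact pair_of_mul_nonneg _ _ h (by simp [T]) (by simp [T]) hac
  · exact pair_of_mul_nonneg _ _ h (by simp [T]) (by simp [T]) hbc

end Ordered

section Euclidean

variable {V : Type*} [NormedAddCommGroup V] [InnerProductSpace ℝ V]

theorem infDist_affineSpan_pair_lt_of_inner_eq_zero {p q x y : V} (hpq : p ≠ q)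
    (hright : ⟪p - q, y - q⟫ = 0) (hx : Wbtw ℝ q x y) :
    infDist x (line[ℝ, p, y] : Set V) < dist p q := by
  set M := line[ℝ, p, y]
  set m : V := ↑(orthogonalProjection M q)
  have hpm : p ≠ m := by
    intro h
    have hperp : ⟪q - p, y - p⟫ = 0 := by
      rw [h]
      exact Submodule.inner_left_of_mem_orthogonal
        (AffineSubspace.vsub_mem_direction (right_mem_affineSpan_pair ℝ p y)
          (orthogonalProjection_mem q))
        (vsub_orthogonalProjection_mem_direction_orthogonal M q)
    have : ⟪p - q, p - q⟫ = ⟪q - p, y - p⟫ + ⟪p - q, y - q⟫ := by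
      simp only [inner_sub_left, inner_sub_right, real_inner_comm]; ring
    rw [hperp, hright, add_zero, real_inner_self_eq_norm_sq, sq_eq_zero_iff, norm_eq_zero,
      sub_eq_zero] at this
    exact hpq this
  have hqm : dist q m < dist p q := by
    have := dist_sq_eq_dist_orthogonalProjection_sq_add_dist_orthogonalProjection_sq q
      (left_mem_affineSpan_pair ℝ p y)
    nlinarith [dist_pos.2 hpm, dist_nonneg (x := q) (y := m), dist_nonneg (x := p) (y := q)]
  obtain ⟨s, ⟨hs₀, hs₁⟩, rfl⟩ := hx
  calc infDist (lineMap q y s) (M : Set V)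
      ≤ dist (lineMap q y s) (lineMap m y s) :=
        infDist_le_dist_of_mem
          (lineMap_mem s (orthogonalProjection_mem q) (right_mem_affineSpan_pair ℝ p y))
    _ = (1 - s) * dist q m := by
        rw [dist_eq_norm, lineMap_apply_module, lineMap_apply_module,
          show (1 - s) • q + s • y - ((1 - s) • m + s • y) = (1 - s) • (q - m) by module,
          norm_smul, Real.norm_of_nonneg (by linarith), dist_eq_norm]
    _ ≤ dist q m := mul_le_of_le_one_left dist_nonneg (by linarith)
    _ < dist p q := hqm

theorem exists_infDist_lt_of_three_mem_affineSpan_pair {p a b c : V}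
    (hp : p ∉ line[ℝ, a, b]) (hc : c ∈ line[ℝ, a, b]) (hab : a ≠ b) (hac : a ≠ c)
    (hbc : b ≠ c) :
    ∃ x ∈ ({a, b, c} : Set V), ∃ y ∈ ({a, b, c} : Set V), p ≠ y ∧ x ∉ line[ℝ, p, y] ∧
      infDist x (line[ℝ, p, y] : Set V) < infDist p (line[ℝ, a, b] : Set V) := by
  set L := line[ℝ, a, b]
  set q : V := ↑(orthogonalProjection L p)
  have hqL : q ∈ L := orthogonalProjection_mem p
  have habcL : ({a, b, c} : Set V) ⊆ L := by
    simp [Set.insert_subset_iff, left_mem_affineSpan_pair, right_mem_affineSpan_pair, hc, L]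
  have hcol : Collinear ℝ ({q, a, b, c} : Set V) :=
    collinear_of_subset_affineSpan_pair (a := a) (b := b) (Set.insert_subset hqL habcL)
  obtain ⟨x, hx, y, hy, hxy, hw⟩ := exists_wbtw_of_collinear hcol hab hac hbc
  have hpy : p ≠ y := by rintro rfl; exact hp (habcL hy)
  refine ⟨x, hx, y, hy, hpy, notMem_affineSpan_pair_of_notMem hp (habcL hx) (habcL hy) hxy, ?_⟩
  have hpq : p ≠ q := fun h => hp (h ▸ hqL)
  have hright : ⟪p - q, y - q⟫ = 0 := Submodule.inner_left_of_mem_orthogonal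
    (AffineSubspace.vsub_mem_direction (habcL hy) hqL)
    (vsub_orthogonalProjection_mem_direction_orthogonal L p)
  exact (infDist_affineSpan_pair_lt_of_inner_eq_zero hpq hright hw).trans_eq
    (dist_orthogonalProjection_eq_infDist L p)

theorem collinear_or_hasOrdinaryLine {S : Set V} (hS : S.Finite) :
    Collinear ℝ S ∨ HasOrdinaryLine ℝ S := by
  refine or_iff_not_imp_left.2 fun hcol => ?_
  by_contra hord
  let T : Set (V × V × V) :=
    {t | t.1 ∈ S ∧ t.2.1 ∈ S ∧ t.2.2 ∈ S ∧ t.2.1 ≠ t.2.2 ∧ t.1 ∉ line[ℝ, t.2.1, t.2.2]}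
  have hT : T.Finite := (hS.prod (hS.prod hS)).subset fun t ht => ⟨ht.1, ht.2.1, ht.2.2.1⟩
  have hTne : T.Nonempty := by
    obtain ⟨p, hp, a, ha, b, hb, hab, hpL⟩ := exists_notMem_affineSpan_pair_of_not_collinear hcol
    exact ⟨(p, a, b), hp, ha, hb, hab, hpL⟩
  obtain ⟨⟨p, a, b⟩, ⟨hp, ha, hb, hab, hpL⟩, hmin⟩ :=
    T.exists_min_image (fun t => infDist t.1 (line[ℝ, t.2.1, t.2.2] : Set V)) hT hTne
  simp only [HasOrdinaryLine, not_exists, not_and, not_forall, not_or] at hord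
  obtain ⟨c, hc, hcL, hca, hcb⟩ := hord a ha b hb hab
  obtain ⟨x, hx, y, hy, hpy, hxM, hlt⟩ :=
    exists_infDist_lt_of_three_mem_affineSpan_pair hpL hcL hab (Ne.symm hca) (Ne.symm hcb)
  have habcS : ({a, b, c} : Set V) ⊆ S := by simp [Set.insert_subset_iff, ha, hb, hc]
  exact (hmin (x, p, y) ⟨habcS hx, hp, habcS hy, hpy, hxM⟩).not_gt hlt

end Euclidean

/-- **Sylvester–Gallai.** Given a finite set `S` of points in the real plane, either all points
of `S` are collinear, or there exist two distinct points of `S` such that the line through them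
contains no other point of `S`. -/
theorem sylvester_gallai (S : Finset (ℝ × ℝ)) :
    Collinear ℝ (S : Set (ℝ × ℝ)) ∨
      ∃ a ∈ S, ∃ b ∈ S, a ≠ b ∧
        ∀ c ∈ S, c ∈ line[ℝ, a, b] → c = a ∨ c = b := by
  let e : (ℝ × ℝ) ≃ᵃ[ℝ] ℂ := Complex.equivRealProdLm.symm.toAffineEquiv
  exact (collinear_or_hasOrdinaryLine (S.finite_toSet.image e)).imp
    e.collinear_image_iff.1 (HasOrdinaryLine.of_image e)
end

section
/- There is no configuration of 9 distinct lines in the real projective plane, not all through one common point, such that every point lying on at least two of the lines lies on at least three of them. In particular, the dual Hesse configuration cannot be realized over the reals. -/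
open scoped LinearAlgebra.Projectivization

/-- A point of the real projective plane lies on a line (a point of the dual projective plane,
given by a nonzero linear form up to scalar) if the standard pairing of representatives
vanishes. -/
def OnLine (p ℓ : Projectivization ℝ (Fin 3 → ℝ)) : Prop :=
  ∑ i, p.rep i * ℓ.rep i = 0

/-!
Dualize through a central projection onto an affine chart: lines not all through one point become
points of a plane that are not all collinear, and a projective point lying on exactly two of the
lines becomes an ordinary line of that point set, i.e. a line through exactly two of its points. Such a line exists by the Sylvester–Gallai
theorem, proved as by Kelly: among all pairs of a point `p` and a line through two points missing
`p`, take one minimizing the distance from `p` to the line. If the line held a third point, two of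
the three, `b` and `c`, would lie on one side of the foot `f` of `p` with `b` between `f` and `c`,
and `b` would be strictly closer to the line `pc` than `p` is to the original line.
-/

open EuclideanGeometry Metric AffineMap Module
open scoped RealInnerProductSpace InnerProductSpace

section Affine

variable {k V P : Type*} [DivisionRing k] [AddCommGroup V] [Module k V] [AddTorsor V P]

lemma collinear_affineSpan_pair (q r : P) : Collinear k (line[k, q, r] : Set P) := by
  rw [Collinear, ← AffineSubspace.direction, direction_affineSpan]
  exact collinear_pair k q r

lemma exists_not_collinear_triple {s : Set P} (h : ¬ Collinear k s) :
    ∃ p ∈ s, ∃ q ∈ s, ∃ r ∈ s, ¬ Collinear k ({p, q, r} : Set P) := by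
  contrapose! h
  rcases s.subsingleton_or_nontrivial with hs | ⟨q, hq, r, hr, hqr⟩
  · rcases hs.eq_empty_or_singleton with rfl | ⟨p, rfl⟩
    exacts [collinear_empty k P, collinear_singleton k p]
  · refine (collinear_affineSpan_pair q r).subset fun p hp => ?_
    exact (h p hp q hq r hr).mem_affineSpan_of_mem_of_ne (by simp) (by simp) (by simp) hqr

end Affine

section Betweenness

variable {k V P : Type*} [Field k] [LinearOrder k] [IsStrictOrderedRing k] [AddCommGroup V]
  [Module k V] [AddTorsor V P]

lemma exists_wbtw_of_three_distinct (φ : k) {α β γ : k} (hαβ : α ≠ β) (hαγ : α ≠ γ)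
    (hβγ : β ≠ γ) :
    ∃ x ∈ ({α, β, γ} : Set k), ∃ y ∈ ({α, β, γ} : Set k), x ≠ y ∧ Wbtw k φ x y := by
  have same_side : ∀ x ∈ ({α, β, γ} : Set k), ∀ y ∈ ({α, β, γ} : Set k), x ≠ y →
      (φ ≤ x ∧ φ ≤ y) ∨ (x ≤ φ ∧ y ≤ φ) →
      ∃ x ∈ ({α, β, γ} : Set k), ∃ y ∈ ({α, β, γ} : Set k), x ≠ y ∧ Wbtw k φ x y := by
    intro x hx y hy hxy hside
    simp only [← mem_segment_iff_wbtw, segment_eq_uIcc, Set.mem_uIcc]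
    rcases le_total x y with h | h
    · rcases hside with ⟨h₁, h₂⟩ | ⟨h₁, h₂⟩
      exacts [⟨x, hx, y, hy, hxy, Or.inl ⟨h₁, h⟩⟩, ⟨y, hy, x, hx, hxy.symm, Or.inr ⟨h, h₂⟩⟩]
    · rcases hside with ⟨h₁, h₂⟩ | ⟨h₁, h₂⟩
      exacts [⟨y, hy, x, hx, hxy.symm, Or.inl ⟨h₂, h⟩⟩, ⟨x, hx, y, hy, hxy, Or.inr ⟨h, h₁⟩⟩]
  rcases le_total φ α with hα | hα <;> rcases le_total φ β with hβ | hβ <;>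
    rcases le_total φ γ with hγ | hγ
  all_goals first
    | exact same_side α (by simp) β (by simp) hαβ (by tauto)
    | exact same_side α (by simp) γ (by simp) hαγ (by tauto)
    | exact same_side β (by simp) γ (by simp) hβγ (by tauto)

lemma exists_wbtw_of_mem_affineSpan_pair {f q r s : P} (hqr : q ≠ r) (hf : f ∈ line[k, q, r])
    (hs : s ∈ line[k, q, r]) (hsq : s ≠ q) (hsr : s ≠ r) :
    ∃ b ∈ ({q, r, s} : Set P), ∃ c ∈ ({q, r, s} : Set P), b ≠ c ∧ Wbtw k f b c := by
  obtain ⟨φ, rfl⟩ := mem_affineSpan_pair_iff_exists_lineMap_eq.1 hf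
  obtain ⟨σ, rfl⟩ := mem_affineSpan_pair_iff_exists_lineMap_eq.1 hs
  have hσ₀ : (0 : k) ≠ σ := fun h => hsq (by rw [← h, lineMap_apply_zero])
  have hσ₁ : (1 : k) ≠ σ := fun h => hsr (by rw [← h, lineMap_apply_one])
  obtain ⟨x, hx, y, hy, hxy, hw⟩ := exists_wbtw_of_three_distinct φ zero_ne_one hσ₀ hσ₁
  have hmem : ∀ t ∈ ({0, 1, σ} : Set k), lineMap q r t ∈ ({q, r, lineMap q r σ} : Set P) := by
    rintro t (rfl | rfl | rfl) <;> simp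
  exact ⟨_, hmem x hx, _, hmem y hy, (lineMap_injective k hqr).ne hxy, hw.map (lineMap q r)⟩

end Betweenness

section SylvesterGallai

variable {E : Type*} [NormedAddCommGroup E] [InnerProductSpace ℝ E]

lemma infDist_affineSpan_pair_lt_dist {x p c : E} (h : ⟪x - p, c - p⟫ ≠ 0) :
    infDist x line[ℝ, p, c] < dist x p := by
  have hp := left_mem_affineSpan_pair ℝ p c
  rw [← dist_orthogonalProjection_eq_infDist]
  refine lt_of_le_of_ne ?_ (mt (dist_orthogonalProjection_eq_dist_iff_eq_of_mem hp).1 ?_)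
  · rw [dist_orthogonalProjection_eq_infDist]
    exact infDist_le_dist_of_mem hp
  · intro hproj
    have hx := vsub_orthogonalProjection_mem_direction_orthogonal line[ℝ, p, c] x
    rw [hproj] at hx
    exact h (Submodule.inner_left_of_mem_orthogonal
      (AffineSubspace.vsub_mem_direction (right_mem_affineSpan_pair ℝ p c) hp) hx)

lemma Wbtw.infDist_le {s : AffineSubspace ℝ E} [Nonempty s] [s.direction.HasOrthogonalProjection]
    {x b c : E} (h : Wbtw ℝ x b c) (hc : c ∈ s) : infDist b s ≤ infDist x s := by
  obtain ⟨t, ⟨ht₀, ht₁⟩, rfl⟩ := h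
  set z := (orthogonalProjection s x : E)
  calc infDist (lineMap x c t) s ≤ dist (lineMap x c t) (lineMap z c t) :=
        infDist_le_dist_of_mem (lineMap_mem t (orthogonalProjection_mem x) hc)
    _ = (1 - t) * dist x z := by
        rw [dist_eq_norm, dist_eq_norm, lineMap_apply_module, lineMap_apply_module,
          ← norm_smul_of_nonneg (by linarith)]
        congr 1
        module
    _ ≤ dist x z := mul_le_of_le_one_left dist_nonneg (by linarith)
    _ = infDist x s := dist_orthogonalProjection_eq_infDist s x

lemma infDist_affineSpan_pair_lt_of_wbtw {s : AffineSubspace ℝ E} [Nonempty s]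
    [s.direction.HasOrthogonalProjection] {p b c : E} (hp : p ∉ s) (hc : c ∈ s)
    (hbc : Wbtw ℝ (orthogonalProjection s p : E) b c) :
    infDist b line[ℝ, p, c] < infDist p s := by
  set f := (orthogonalProjection s p : E)
  have hf : f ≠ p := mt orthogonalProjection_eq_self_iff.1 hp
  have hperp : ⟪f - p, c - f⟫ = 0 :=
    (real_inner_comm _ _).trans <| Submodule.inner_right_of_mem_orthogonal
      (AffineSubspace.vsub_mem_direction hc (orthogonalProjection_mem p))
      (orthogonalProjection_vsub_mem_direction_orthogonal s p)
  have hfp : ⟪f - p, c - p⟫ ≠ 0 := by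
    rw [← sub_add_sub_cancel c f p, inner_add_right, hperp, zero_add, real_inner_self_eq_norm_sq]
    exact pow_ne_zero 2 (norm_ne_zero_iff.2 (sub_ne_zero.2 hf))
  calc infDist b line[ℝ, p, c] ≤ infDist f line[ℝ, p, c] :=
        hbc.infDist_le (right_mem_affineSpan_pair ℝ p c)
    _ < dist f p := infDist_affineSpan_pair_lt_dist hfp
    _ = infDist p s := by rw [dist_comm, dist_orthogonalProjection_eq_infDist]

theorem exists_ordinary_line (S : Finset E) (hS : ¬ Collinear ℝ (S : Set E)) :
    ∃ q ∈ S, ∃ r ∈ S, q ≠ r ∧ ∀ s ∈ S, s ∈ line[ℝ, q, r] → s = q ∨ s = r := by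
  classical
  let T := (S ×ˢ S ×ˢ S).filter fun t => ¬ Collinear ℝ ({t.1, t.2.1, t.2.2} : Set E)
  have hT : T.Nonempty := by
    obtain ⟨p, hp, q, hq, r, hr, h⟩ := exists_not_collinear_triple hS
    exact ⟨(p, q, r), by simp_all [T]⟩
  obtain ⟨⟨p, q, r⟩, hpqr, hmin⟩ :=
    T.exists_min_image (fun t => infDist t.1 line[ℝ, t.2.1, t.2.2]) hT
  simp only [T, Finset.mem_filter, Finset.mem_product] at hpqr hmin
  obtain ⟨⟨hp, hq, hr⟩, hpqr⟩ := hpqr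
  have hqr : q ≠ r := ne₂₃_of_not_collinear hpqr
  have hpl : p ∉ line[ℝ, q, r] := fun h => hpqr (collinear_insert_of_mem_affineSpan_pair h)
  refine ⟨q, hq, r, hr, hqr, fun s hs hsl => ?_⟩
  by_contra! hne
  obtain ⟨b, hb, c, hc, hbc, hw⟩ := exists_wbtw_of_mem_affineSpan_pair hqr
    (orthogonalProjection_mem p) hsl hne.1 hne.2
  have hqrs : ∀ x ∈ ({q, r, s} : Set E), x ∈ S ∧ x ∈ line[ℝ, q, r] := by
    rintro x (rfl | rfl | rfl)
    exacts [⟨hq, left_mem_affineSpan_pair ℝ _ _⟩, ⟨hr, right_mem_affineSpan_pair ℝ _ _⟩, ⟨hs, hsl⟩]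
  have hbpc : ¬ Collinear ℝ ({b, p, c} : Set E) := fun h =>
    hpl (affineSpan_pair_le_of_mem_of_mem (hqrs b hb).2 (hqrs c hc).2
      (h.mem_affineSpan_of_mem_of_ne (by simp) (by simp) (by simp) hbc))
  exact (hmin (b, p, c) ⟨⟨(hqrs b hb).1, hp, (hqrs c hc).1⟩, hbpc⟩).not_gt
    (infDist_affineSpan_pair_lt_of_wbtw hpl (hqrs c hc).2 hw)

end SylvesterGallai

lemma exists_forall_inner_ne_zero {𝕜 E : Type*} [RCLike 𝕜] [NormedAddCommGroup E]
    [InnerProductSpace 𝕜 E] (F : Finset E) (hF : 0 ∉ F) : ∃ w : E, ∀ v ∈ F, ⟪w, v⟫_𝕜 ≠ 0 := by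
  by_contra! h
  have hcover : ⋃ v : F, (((𝕜 ∙ (v : E))ᗮ : Submodule 𝕜 E) : Set E) = Set.univ :=
    Set.eq_univ_of_forall fun w => by
      obtain ⟨v, hv, hvw⟩ := h w
      exact Set.mem_iUnion.2 ⟨⟨v, hv⟩, Submodule.mem_orthogonal_singleton_iff_inner_left.2 hvw⟩
  obtain ⟨⟨v, hv⟩, htop⟩ := Subspace.exists_eq_top_of_iUnion_eq_univ hcover
  have : v ∈ (𝕜 ∙ v)ᗮ := htop ▸ Submodule.mem_top
  rw [Submodule.mem_orthogonal_singleton_iff_inner_right, inner_self_eq_zero] at this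
  exact hF (this ▸ hv)

section CentralProjection

variable {E : Type*} [NormedAddCommGroup E] [InnerProductSpace ℝ E]

noncomputable def centralProjection (w v : E) : E := ⟪w, v⟫⁻¹ • v

variable {w v : E}

lemma inner_centralProjection (hv : ⟪w, v⟫ ≠ 0) : ⟪w, centralProjection w v⟫ = 1 := by
  rw [centralProjection, real_inner_smul_right, inv_mul_cancel₀ hv]

lemma inner_centralProjection_eq_zero_iff (hv : ⟪w, v⟫ ≠ 0) (n : E) :
    ⟪n, centralProjection w v⟫ = 0 ↔ ⟪n, v⟫ = 0 := by
  rw [centralProjection, real_inner_smul_right, mul_eq_zero, or_iff_right (inv_ne_zero hv)]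

lemma exists_smul_eq_of_centralProjection_eq {u : E} (hu : ⟪w, u⟫ ≠ 0)
    (h : centralProjection w u = centralProjection w v) : ∃ a : ℝ, a • v = u := by
  refine ⟨⟪w, u⟫ * ⟪w, v⟫⁻¹, ?_⟩
  rw [mul_smul, ← centralProjection, ← h, centralProjection, smul_inv_smul₀ hu]

end CentralProjection

lemma collinear_iff_exists_inner_eq_zero {E : Type*} [NormedAddCommGroup E]
    [InnerProductSpace ℝ E] [Fact (finrank ℝ E = 3)] {w : E} {A : Set E}
    (hA : ∀ a ∈ A, ⟪w, a⟫ = 1) : Collinear ℝ A ↔ ∃ n ≠ 0, ∀ a ∈ A, ⟪n, a⟫ = 0 := by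
  have : FiniteDimensional ℝ E := .of_fact_finrank_eq_succ 2
  constructor
  · rw [collinear_iff_exists_forall_eq_smul_vadd]
    rintro ⟨x₀, v, hv⟩
    let W := Submodule.span ℝ (Set.range ![x₀, v])
    have hW : W ≠ ⊤ := by
      intro h
      have := finrank_range_le_card (R := ℝ) ![x₀, v]
      change finrank ℝ W ≤ _ at this
      rw [h, finrank_top, Fact.out (p := finrank ℝ E = 3)] at this
      simp at this
    obtain ⟨n, hnW, hn⟩ :=
      Wᗮ.exists_mem_ne_zero_of_ne_bot (mt Submodule.orthogonal_eq_bot_iff.1 hW)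
    refine ⟨n, hn, fun a ha => ?_⟩
    obtain ⟨t, rfl⟩ := hv a ha
    have hx₀ : x₀ ∈ W := Submodule.subset_span ⟨0, rfl⟩
    have hv : v ∈ W := Submodule.subset_span ⟨1, rfl⟩
    exact Submodule.inner_left_of_mem_orthogonal (W.add_mem (W.smul_mem t hv) hx₀) hnW
  · rintro ⟨n, hn, hnA⟩
    rcases A.eq_empty_or_nonempty with rfl | ⟨a₀, ha₀⟩
    · exact collinear_empty ℝ E
    let K := (ℝ ∙ n)ᗮ ⊓ (ℝ ∙ w)ᗮ
    have hspan : vectorSpan ℝ A ≤ K := by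
      rw [vectorSpan_def, Submodule.span_le]
      rintro _ ⟨a, ha, b, hb, rfl⟩
      simp only [K, SetLike.mem_coe, Submodule.mem_inf,
        Submodule.mem_orthogonal_singleton_iff_inner_right, vsub_eq_sub, inner_sub_right,
        hnA a ha, hnA b hb, hA a ha, hA b hb, sub_self, and_self]
    have hK : K < (ℝ ∙ n)ᗮ := by
      refine lt_of_le_of_ne inf_le_left fun h => ?_
      have : a₀ ∈ K := h ▸ Submodule.mem_orthogonal_singleton_iff_inner_right.2 (hnA a₀ ha₀)
      have := Submodule.mem_orthogonal_singleton_iff_inner_right.1 this.2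
      rw [hA a₀ ha₀] at this
      exact one_ne_zero this
    have h2 : finrank ℝ (ℝ ∙ n)ᗮ = 2 := Submodule.finrank_orthogonal_span_singleton hn
    rw [collinear_iff_finrank_le_one]
    linarith [Submodule.finrank_mono hspan, Submodule.finrank_lt_finrank_of_lt hK]

open WithLp (toLp ofLp)

lemma onLine_mk_iff {n : Fin 3 → ℝ} (hn : n ≠ 0) (ℓ : ℙ ℝ (Fin 3 → ℝ)) :
    OnLine (Projectivization.mk ℝ n hn) ℓ ↔ ⟪toLp 2 n, toLp 2 ℓ.rep⟫ = 0 := by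
  obtain ⟨a, ha⟩ := Projectivization.exists_smul_eq_mk_rep ℝ n hn
  rw [OnLine, ← ha, EuclideanSpace.inner_toLp_toLp]
  simp [dotProduct, Units.smul_def, mul_assoc, ← Finset.mul_sum, mul_comm]

open EuclideanSpace in
theorem exists_ordinary_point (L : Finset (ℙ ℝ (Fin 3 → ℝ)))
    (hL : ¬ ∃ p, ∀ ℓ ∈ L, OnLine p ℓ) :
    ∃ p, ∃ q ∈ L, ∃ r ∈ L, q ≠ r ∧ ∀ ℓ ∈ L, OnLine p ℓ ↔ ℓ = q ∨ ℓ = r := by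
  classical
  let v (ℓ : ℙ ℝ (Fin 3 → ℝ)) : EuclideanSpace ℝ (Fin 3) := toLp 2 ℓ.rep
  obtain ⟨w, hw⟩ := exists_forall_inner_ne_zero (𝕜 := ℝ) (L.image v)
    (by simp [v, Projectivization.rep_nonzero])
  have hwv : ∀ ℓ ∈ L, ⟪w, v ℓ⟫ ≠ 0 := fun ℓ hℓ => hw _ (Finset.mem_image_of_mem v hℓ)
  let χ ℓ := centralProjection w (v ℓ)
  have hχ : ∀ ℓ ∈ L, ⟪w, χ ℓ⟫ = 1 := fun ℓ hℓ => inner_centralProjection (hwv ℓ hℓ)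
  have hχinj : Set.InjOn χ L := fun ℓ hℓ m _ h => by
    obtain ⟨a, ha⟩ := exists_smul_eq_of_centralProjection_eq (hwv ℓ hℓ) h
    rw [← ℓ.mk_rep, ← m.mk_rep, Projectivization.mk_eq_mk_iff']
    exact ⟨a, congrArg ofLp ha⟩
  have hpoint : ∀ n ≠ 0, ∃ p, ∀ ℓ ∈ L, OnLine p ℓ ↔ ⟪n, χ ℓ⟫ = 0 := fun n hn =>
    ⟨Projectivization.mk ℝ (ofLp n) (by simpa using hn), fun ℓ hℓ => by
      rw [onLine_mk_iff, WithLp.toLp_ofLp, inner_centralProjection_eq_zero_iff (hwv ℓ hℓ)]⟩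
  have hA : ¬ Collinear ℝ (L.image χ : Set (EuclideanSpace ℝ (Fin 3))) := by
    rw [collinear_iff_exists_inner_eq_zero (w := w) (by simpa using hχ)]
    rintro ⟨n, hn, hnA⟩
    obtain ⟨p, hp⟩ := hpoint n hn
    exact hL ⟨p, fun ℓ hℓ => (hp ℓ hℓ).2 (hnA _ (Finset.mem_image_of_mem χ hℓ))⟩
  obtain ⟨_, hqχ, _, hrχ, hqr, hord⟩ := exists_ordinary_line _ hA
  obtain ⟨q, hq, rfl⟩ := Finset.mem_image.1 hqχ
  obtain ⟨r, hr, rfl⟩ := Finset.mem_image.1 hrχ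
  have hχ3 : ∀ ℓ ∈ L, ∀ a ∈ ({χ q, χ r, χ ℓ} : Set _), ⟪w, a⟫ = 1 := by
    rintro ℓ hℓ _ (rfl | rfl | rfl)
    exacts [hχ q hq, hχ r hr, hχ ℓ hℓ]
  obtain ⟨n, hn, hnqr⟩ := (collinear_iff_exists_inner_eq_zero (hχ3 r hr)).1
    (by simpa using collinear_pair ℝ (χ q) (χ r))
  obtain ⟨p, hp⟩ := hpoint n hn
  refine ⟨p, q, hq, r, hr, ne_of_apply_ne χ hqr, fun ℓ hℓ => ?_⟩
  rw [hp ℓ hℓ]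
  constructor
  · intro hnℓ
    have hcol : Collinear ℝ {χ q, χ r, χ ℓ} := (collinear_iff_exists_inner_eq_zero (hχ3 ℓ hℓ)).2
      ⟨n, hn, by rintro _ (rfl | rfl | rfl) <;> simp_all⟩
    exact (hord _ (Finset.mem_image_of_mem χ hℓ) (hcol.mem_affineSpan_of_mem_of_ne
      (by simp) (by simp) (by simp) hqr)).imp (hχinj hℓ hq) (hχinj hℓ hr)
  · rintro (rfl | rfl) <;> simp [hnqr]

/-- There is no configuration of 9 distinct lines in the real projective plane, not all through
one common point, such that every point lying on at least two of the lines lies on at least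
three of them.  (In particular, the dual Hesse configuration cannot be realized over the
reals.) -/
theorem no_real_dual_hesse :
    ¬ ∃ L : Finset (Projectivization ℝ (Fin 3 → ℝ)),
      L.card = 9 ∧
      (¬ ∃ p : Projectivization ℝ (Fin 3 → ℝ), ∀ ℓ ∈ L, OnLine p ℓ) ∧
      (∀ p : Projectivization ℝ (Fin 3 → ℝ),
        2 ≤ {ℓ ∈ (L : Set (Projectivization ℝ (Fin 3 → ℝ))) | OnLine p ℓ}.ncard →
        3 ≤ {ℓ ∈ (L : Set (Projectivization ℝ (Fin 3 → ℝ))) | OnLine p ℓ}.ncard) := by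
  rintro ⟨L, -, hpencil, hmeet⟩
  obtain ⟨p, q, hq, r, hr, hqr, hp⟩ := exists_ordinary_point L hpencil
  have hpair : {ℓ ∈ (L : Set (Projectivization ℝ (Fin 3 → ℝ))) | OnLine p ℓ} = {q, r} := by
    ext ℓ
    constructor
    · rintro ⟨hℓ, hpℓ⟩
      exact (hp ℓ hℓ).1 hpℓ
    · rintro (rfl | rfl)
      exacts [⟨hq, (hp _ hq).2 (Or.inl rfl)⟩, ⟨hr, (hp _ hr).2 (Or.inr rfl)⟩]
  have h := hmeet p
  rw [hpair, Set.ncard_pair hqr] at h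
  exact absurd (h le_rfl) (by norm_num)
end

section
/- (Füredi–Palásti concurrency lemma) Let n be a positive integer, ξ = exp(2πi/n), and P_m = ξ^m on the unit circle. For indices m, k, let L_{m,k} denote the line through P_m and P_k if m ≠ k, and the tangent line to the unit circle at P_m if m = k. Then for the lines L_i := L_{i, n/2 - 2i} (indices mod n, n even), three distinct lines L_i, L_j, L_k are concurrent if and only if n divides i + j + k. -/
noncomputable section

open Complex

/-- The point `P_m = ξ^m` on the unit circle, where `ξ = exp(2πi/n)`, identifying `ℝ²` with
`ℂ`. -/
def pt (n : ℕ) (m : ℤ) : ℂ := Complex.exp (2 * Real.pi * Complex.I * m / n)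

/-- A direction vector of the line `L_{m,k}`: the chord direction if `P_m ≠ P_k`, and the
tangent direction `i·P_m` to the unit circle at `P_m` if `P_m = P_k`. -/
def dirL (n : ℕ) (m k : ℤ) : ℂ :=
  if pt n m = pt n k then Complex.I * pt n m else pt n k - pt n m

/-- The (real) line `L_{m,k}` through `P_m` and `P_k` (the tangent line to the unit circle at
`P_m` when `P_m = P_k`), as a subset of `ℂ ≅ ℝ²`. -/
def lineL (n : ℕ) (m k : ℤ) : Set ℂ :=
  {z | ∃ t : ℝ, z = pt n m + (t : ℂ) * dirL n m k}

/-- Two direction vectors are parallel iff they are proportional over `ℝ`, i.e.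
`u·conj v` is real. -/
def IsParallel (u v : ℂ) : Prop := (u * (starRingEnd ℂ) v).im = 0

/-- Three lines (with given direction vectors) are concurrent in the real projective plane:
they meet in a common (affine) point, or they are pairwise parallel (common point at
infinity). -/
def ConcurrentLines (L₁ L₂ L₃ : Set ℂ) (d₁ d₂ d₃ : ℂ) : Prop :=
  (∃ z : ℂ, z ∈ L₁ ∧ z ∈ L₂ ∧ z ∈ L₃) ∨ (IsParallel d₁ d₂ ∧ IsParallel d₁ d₃)

/-- The `i`-th line `L_i = L_{i, n/2 - 2i}` of the Füredi–Palásti configuration (`n` even). -/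
def FPline (n : ℕ) (i : ℤ) : Set ℂ := lineL n i ((n : ℤ) / 2 - 2 * i)

/-- Direction of the `i`-th Füredi–Palásti line. -/
def FPdir (n : ℕ) (i : ℤ) : ℂ := dirL n i ((n : ℤ) / 2 - 2 * i)

/-! The chord or tangent `L_{a,b}` of the unit circle is the line `z + a b z̄ = a + b`; since
`P_{n/2 - 2i} = -P_i⁻²`, the line `L_i` is `x² z - x z̄ = x³ - 1` with `x = P_i`. Eliminating `z`
and `z̄` from the equations of `L_i, L_j, L_k` leaves `(x y w - 1)(x - y)(y - w)(w - x) = 0`;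
conversely, if `x y w = 1` then `x + y + w` lies on all three lines. No two distinct lines of the
configuration are parallel, because the direction of `L_{a,b}` determines the product `a b`. -/

open ComplexConjugate

section RootsOfUnity

variable {n : ℕ}

lemma pt_eq_zpow (n : ℕ) (m : ℤ) : pt n m = exp (2 * Real.pi * I / n) ^ m := by
  rw [pt, ← exp_int_mul]; ring_nf

lemma pt_ne_zero (n : ℕ) (m : ℤ) : pt n m ≠ 0 := exp_ne_zero _

lemma pt_add (n : ℕ) (a b : ℤ) : pt n (a + b) = pt n a * pt n b := by
  simp only [pt_eq_zpow, zpow_add₀ (exp_ne_zero _)]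

lemma pt_neg (n : ℕ) (m : ℤ) : pt n (-m) = (pt n m)⁻¹ := by
  rw [pt_eq_zpow, pt_eq_zpow, zpow_neg]

lemma conj_pt (n : ℕ) (m : ℤ) : conj (pt n m) = (pt n m)⁻¹ := by
  rw [pt, ← exp_conj, ← exp_neg]
  congr 1
  simp only [map_div₀, map_mul, conj_I, conj_ofReal, map_intCast, map_natCast, map_ofNat]
  ring

lemma pt_eq_one_iff (hn : 0 < n) (m : ℤ) : pt n m = 1 ↔ (n : ℤ) ∣ m := by
  rw [pt_eq_zpow, (isPrimitiveRoot_exp n hn.ne').zpow_eq_one_iff_dvd]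

lemma pt_half (hn : 0 < n) (hne : Even n) : pt n ((n : ℤ) / 2) = -1 := by
  obtain ⟨t, rfl⟩ := hne
  have ht : t ≠ 0 := by omega
  have h := (isPrimitiveRoot_exp (t + t) hn.ne').pow_of_dvd ht (Dvd.intro_left 2 (by ring))
  rw [show (t + t) / t = 2 by rw [← two_mul, Nat.mul_div_cancel _ (Nat.pos_of_ne_zero ht)]] at h
  rw [pt_eq_zpow, ← h.eq_neg_one_of_two_right, show ((t + t : ℕ) : ℤ) / 2 = t by omega]
  norm_cast

end RootsOfUnity

lemma exists_real_eq_add_mul_iff {a b d z : ℂ} (ha : conj a = a⁻¹) (hd : d ≠ 0)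
    (hdc : d = -(a * b) * conj d) :
    (∃ t : ℝ, z = a + t * d) ↔ z + a * b * conj z = a + b := by
  have ha0 : a ≠ 0 := by rintro rfl; simp [hd] at hdc
  have hcd : conj d ≠ 0 := (map_ne_zero _).mpr hd
  constructor
  · rintro ⟨t, rfl⟩
    simp only [map_add, map_mul, conj_ofReal, ha]
    linear_combination (t : ℂ) * hdc + b * mul_inv_cancel₀ ha0
  · intro h
    have hreal : conj ((z - a) / d) = (z - a) / d := by
      rw [map_div₀, map_sub, ha, div_eq_div_iff hcd hd]
      field_simp
      linear_combination (a * conj z - 1) * hdc - a * conj d * h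
    refine ⟨((z - a) / d).re, ?_⟩
    rw [conj_eq_iff_re.mp hreal]
    field_simp
    ring

lemma IsParallel.eq_of_eq_neg_mul_conj {d₁ d₂ c₁ c₂ : ℂ} (h : IsParallel d₁ d₂) (hd₁ : d₁ ≠ 0)
    (hd₂ : d₂ ≠ 0) (h₁ : d₁ = -c₁ * conj d₁) (h₂ : d₂ = -c₂ * conj d₂) : c₁ = c₂ := by
  have hreal : conj d₁ * d₂ = d₁ * conj d₂ := by
    simpa using conj_eq_iff_im.mpr h
  have hc : conj d₁ * conj d₂ ≠ 0 :=
    mul_ne_zero ((map_ne_zero _).mpr hd₁) ((map_ne_zero _).mpr hd₂)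
  apply mul_right_cancel₀ hc
  linear_combination conj d₂ * h₁ - conj d₁ * h₂ + hreal

lemma mul_mul_eq_one_of_common_solution {x y w z u : ℂ} (hxy : x ≠ y) (hyw : y ≠ w) (hxw : x ≠ w)
    (hx : x ^ 2 * z - x * u = x ^ 3 - 1) (hy : y ^ 2 * z - y * u = y ^ 3 - 1)
    (hw : w ^ 2 * z - w * u = w ^ 3 - 1) : x * y * w = 1 := by
  -- each equation is weighted by the `2 × 2` minor of the other two rows, which kills `z` and `u`
  have hdet : (x * y * w - 1) * ((x - y) * (y - w) * (w - x)) = 0 := by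
    linear_combination (y * w * (y - w)) * hx + (w * x * (w - x)) * hy + (x * y * (x - y)) * hw
  have hV : (x - y) * (y - w) * (w - x) ≠ 0 := by
    simp [sub_eq_zero, hxy, hyw, hxw.symm]
  exact sub_eq_zero.mp ((mul_eq_zero.mp hdet).resolve_right hV)

lemma sq_mul_add_add_sub_mul_conj {x y w : ℂ} (hx : conj x = x⁻¹) (hy : conj y = y⁻¹)
    (hw : conj w = w⁻¹) (h : x * y * w = 1) :
    x ^ 2 * (x + y + w) - x * conj (x + y + w) = x ^ 3 - 1 := by
  have hx' : x⁻¹ = y * w := inv_eq_of_mul_eq_one_right (by linear_combination h)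
  have hy' : y⁻¹ = x * w := inv_eq_of_mul_eq_one_right (by linear_combination h)
  have hw' : w⁻¹ = x * y := inv_eq_of_mul_eq_one_right (by linear_combination h)
  simp only [map_add, hx, hy, hw, hx', hy', hw']
  linear_combination -h

section FurediPalasti

variable {n : ℕ}

lemma dirL_ne_zero (n : ℕ) (m k : ℤ) : dirL n m k ≠ 0 := by
  unfold dirL
  split_ifs with h
  · exact mul_ne_zero I_ne_zero (pt_ne_zero n m)
  · exact sub_ne_zero.mpr (Ne.symm h)

lemma dirL_eq_neg_mul_conj (n : ℕ) (m k : ℤ) :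
    dirL n m k = -(pt n m * pt n k) * conj (dirL n m k) := by
  have hm := pt_ne_zero n m
  have hk := pt_ne_zero n k
  unfold dirL
  split_ifs with h
  · simp only [map_mul, conj_I, conj_pt, ← h]
    field_simp
  · simp only [map_sub, conj_pt]
    field_simp
    ring

lemma mem_lineL_iff (n : ℕ) (m k : ℤ) (z : ℂ) :
    z ∈ lineL n m k ↔ z + pt n m * pt n k * conj z = pt n m + pt n k :=
  exists_real_eq_add_mul_iff (conj_pt n m) (dirL_ne_zero n m k) (dirL_eq_neg_mul_conj n m k)

lemma pt_half_sub_two_mul (hn : 0 < n) (hne : Even n) (m : ℤ) :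
    pt n ((n : ℤ) / 2 - 2 * m) = -(pt n m)⁻¹ ^ 2 := by
  rw [show (n : ℤ) / 2 - 2 * m = n / 2 + (-m + -m) by ring, pt_add, pt_add, pt_half hn hne,
    pt_neg]
  ring

lemma mem_FPline_iff (hn : 0 < n) (hne : Even n) (m : ℤ) (z : ℂ) :
    z ∈ FPline n m ↔ pt n m ^ 2 * z - pt n m * conj z = pt n m ^ 3 - 1 := by
  have h0 := pt_ne_zero n m
  rw [FPline, mem_lineL_iff, pt_half_sub_two_mul hn hne]
  constructor <;> intro h
  · field_simp at h
    linear_combination h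
  · field_simp
    linear_combination h

lemma FPline_eq_of_pt_eq (hn : 0 < n) (hne : Even n) {i j : ℤ} (h : pt n i = pt n j) :
    FPline n i = FPline n j :=
  Set.ext fun z => by rw [mem_FPline_iff hn hne, mem_FPline_iff hn hne, h]

lemma pt_eq_of_isParallel_FPdir (hn : 0 < n) (hne : Even n) {i j : ℤ}
    (h : IsParallel (FPdir n i) (FPdir n j)) : pt n i = pt n j := by
  have := h.eq_of_eq_neg_mul_conj (dirL_ne_zero n i _) (dirL_ne_zero n j _)
    (dirL_eq_neg_mul_conj n i _) (dirL_eq_neg_mul_conj n j _)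
  rw [pt_half_sub_two_mul hn hne, pt_half_sub_two_mul hn hne] at this
  have hi := pt_ne_zero n i
  have hj := pt_ne_zero n j
  field_simp at this
  linear_combination this

end FurediPalasti

/-- **Füredi–Palásti concurrency lemma.** For even `n > 0`, three distinct lines
`L_i, L_j, L_k` of the configuration `{L_{i, n/2-2i}}` are concurrent (in the real projective
plane) if and only if `n` divides `i + j + k`. -/
theorem furedi_palasti_concurrency (n : ℕ) (hn : 0 < n) (hne : Even n) (i j k : ℤ)
    (hij : FPline n i ≠ FPline n j) (hjk : FPline n j ≠ FPline n k)
    (hik : FPline n i ≠ FPline n k) :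
    ConcurrentLines (FPline n i) (FPline n j) (FPline n k)
        (FPdir n i) (FPdir n j) (FPdir n k) ↔
      (n : ℤ) ∣ i + j + k := by
  have hpt {a b : ℤ} (h : FPline n a ≠ FPline n b) : pt n a ≠ pt n b :=
    fun e => h (FPline_eq_of_pt_eq hn hne e)
  have not_parallel : ¬ IsParallel (FPdir n i) (FPdir n j) :=
    fun h => hpt hij (pt_eq_of_isParallel_FPdir hn hne h)
  rw [ConcurrentLines, or_iff_left (not_parallel ·.1), ← pt_eq_one_iff hn, pt_add, pt_add]
  simp only [mem_FPline_iff hn hne]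
  constructor
  · rintro ⟨z, hi, hj, hk⟩
    exact mul_mul_eq_one_of_common_solution (hpt hij) (hpt hjk) (hpt hik) hi hj hk
  · intro h
    refine ⟨pt n i + pt n j + pt n k, ?_, ?_, ?_⟩
    · exact sq_mul_add_add_sub_mul_conj (conj_pt n i) (conj_pt n j) (conj_pt n k) h
    · rw [add_comm (pt n i)]
      exact sq_mul_add_add_sub_mul_conj (conj_pt n j) (conj_pt n i) (conj_pt n k)
        (by linear_combination h)
    · rw [← add_rotate]
      exact sq_mul_add_add_sub_mul_conj (conj_pt n k) (conj_pt n i) (conj_pt n j)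
        (by linear_combination h)

end
end

section
/- In the Füredi–Palásti configuration of 12 lines (n = 12), there are exactly 19 triple points; three of the configuration lines (the tangents at P_2, P_6, P_10) each contain exactly 4 of the triple points, and each of the remaining 9 lines contains exactly 5 of the triple points. -/
noncomputable section

/-!
The line `L_i` is the tangent at `ξ^i` to the deltoid `t ↦ 2t + t⁻²`, with equation
`z - t⁻¹ z̄ = t - t⁻²` for `t = ξ^i`. For unit `u, v, w` with `uvw = 1` the point `u + v + w`
lies on the tangent at `t` exactly when `(t - u)(t - v)(t - w) = 0`, and the tangents at
`u ≠ v` meet only at `u + v + (uv)⁻¹`. So every point on two lines `L_i, L_j` is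
`ξ^i + ξ^j + ξ^k` with `i + j + k = 0`, and lies on `L_i, L_j, L_k` and no other line. Triple
points thus correspond bijectively to the 3-element subsets of `ℤ/12` with zero sum, which
are counted directly.
-/

open Complex ComplexConjugate Finset ZMod

namespace FurediPalasti

/-- The tangent at the point `2u + u⁻²` to the deltoid `t ↦ 2t + t⁻²` (`‖t‖ = 1`). -/
def deltoidTangent (u : ℂ) : Set ℂ := {z | z - u⁻¹ * conj z = u - u⁻¹ ^ 2}

section Deltoid

variable {u v w t z : ℂ}

theorem eq_of_mem_deltoidTangent (hu : u ≠ 0) (hv : v ≠ 0) (huv : u ≠ v)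
    (hzu : z ∈ deltoidTangent u) (hzv : z ∈ deltoidTangent v) : z = u + v + (u * v)⁻¹ := by
  simp only [deltoidTangent, Set.mem_ofPred_eq] at hzu hzv
  field_simp at hzu hzv
  have key : u * v * (u - v) * (z - (u + v + (u * v)⁻¹)) = 0 := by
    linear_combination v * hzu - u * hzv - (u - v) * mul_inv_cancel₀ (mul_ne_zero hu hv)
  have hne : u * v * (u - v) ≠ 0 := mul_ne_zero (mul_ne_zero hu hv) (sub_ne_zero.mpr huv)
  exact sub_eq_zero.mp ((mul_eq_zero.mp key).resolve_left hne)

/-- Multiplied by `t²`, the equation of the tangent at `t` becomes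
`(t - u)(t - v)(t - w) = t³ - (u + v + w) t² + conj (u + v + w) t - 1 = 0`. -/
theorem add_add_mem_deltoidTangent_iff (hu : ‖u‖ = 1) (hv : ‖v‖ = 1) (hw : ‖w‖ = 1)
    (ht : t ≠ 0) (huvw : u * v * w = 1) :
    u + v + w ∈ deltoidTangent t ↔ t = u ∨ t = v ∨ t = w := by
  have hconj : conj (u + v + w) = v * w + u * w + u * v := by
    have hu' : u⁻¹ = v * w := inv_eq_of_mul_eq_one_right (by linear_combination huvw)
    have hv' : v⁻¹ = u * w := inv_eq_of_mul_eq_one_right (by linear_combination huvw)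
    have hw' : w⁻¹ = u * v := inv_eq_of_mul_eq_one_right (by linear_combination huvw)
    rw [map_add, map_add, ← inv_eq_conj hu, ← inv_eq_conj hv, ← inv_eq_conj hw, hu', hv', hw']
  have key : t ^ 2 * (u + v + w - t⁻¹ * conj (u + v + w) - (t - t⁻¹ ^ 2)) =
      -((t - u) * (t - v) * (t - w)) := by
    rw [hconj]
    linear_combination (-t * (v * w + u * w + u * v) + t * t⁻¹ + 1) * mul_inv_cancel₀ ht - huvw
  simp only [deltoidTangent, Set.mem_ofPred_eq]
  rw [← sub_eq_zero, ← mul_right_inj' (pow_ne_zero 2 ht), mul_zero, key, neg_eq_zero,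
    mul_eq_zero, mul_eq_zero, sub_eq_zero, sub_eq_zero, sub_eq_zero, or_assoc]

end Deltoid

theorem exists_real_mul_eq_iff {p d z : ℂ} (hd : d ≠ 0) :
    (∃ t : ℝ, z = p + t * d) ↔ conj d * (z - p) = d * conj (z - p) := by
  constructor
  · rintro ⟨t, rfl⟩
    simp only [add_sub_cancel_left, map_mul, conj_ofReal]
    ring
  · intro h
    refine ⟨((z - p) / d).re, ?_⟩
    have hreal : conj ((z - p) / d) = (z - p) / d := by
      rw [map_div₀, div_eq_div_iff ((map_ne_zero _).mpr hd) hd]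
      linear_combination -h
    rw [conj_eq_iff_re.mp hreal, div_mul_cancel₀ _ hd, add_sub_cancel]

theorem exists_real_mul_chord_iff {u v z : ℂ} (hu : ‖u‖ = 1) (hv : ‖v‖ = 1) :
    (∃ t : ℝ, z = u + t * (if u = v then I * u else v - u)) ↔
      z + u * v * conj z = u + v := by
  have hu0 : u ≠ 0 := ne_zero_of_norm_ne_zero (hu.symm ▸ one_ne_zero)
  have hv0 : v ≠ 0 := ne_zero_of_norm_ne_zero (hv.symm ▸ one_ne_zero)
  obtain ⟨d, c, rfl, hd, hc, key⟩ : ∃ d c : ℂ, (if u = v then I * u else v - u) = d ∧ d ≠ 0 ∧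
      c ≠ 0 ∧ conj d * (z - u) - d * conj (z - u) = c * (z + u * v * conj z - (u + v)) := by
    by_cases huv : u = v
    · refine ⟨_, -I * u⁻¹, if_pos huv, mul_ne_zero I_ne_zero hu0, by simp [hu0], ?_⟩
      rw [← huv, map_mul, map_sub, conj_I, ← inv_eq_conj hu]
      field_simp
      ring
    · refine ⟨_, (u - v) * (u * v)⁻¹, if_neg huv, sub_ne_zero.mpr (Ne.symm huv),
        by simp [sub_ne_zero.mpr huv, hu0, hv0], ?_⟩
      rw [map_sub, map_sub, ← inv_eq_conj hu, ← inv_eq_conj hv]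
      field_simp
      ring
  rw [exists_real_mul_eq_iff hd, ← sub_eq_zero, key, mul_eq_zero, or_iff_right hc, sub_eq_zero]

theorem norm_pt (n : ℕ) (m : ℤ) : ‖pt n m‖ = 1 := by
  simp [pt, norm_exp]

theorem mem_lineL_iff (n : ℕ) (a b : ℤ) (z : ℂ) :
    z ∈ lineL n a b ↔ z + pt n a * pt n b * conj z = pt n a + pt n b :=
  exists_real_mul_chord_iff (norm_pt n a) (norm_pt n b)

theorem sum_triple {α M : Type*} [DecidableEq α] [AddCommMonoid M] {a b c : α} (f : α → M)
    (hab : a ≠ b) (hac : a ≠ c) (hbc : b ≠ c) : ∑ m ∈ {a, b, c}, f m = f a + f b + f c := by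
  rw [sum_insert (by simp [hab, hac]), sum_pair hbc, add_assoc]

section RootsOfUnity

variable {N : ℕ} [NeZero N]

theorem pt_eq_stdAddChar (m : ℤ) : pt N m = stdAddChar (m : ZMod N) :=
  (stdAddChar_coe m).symm

theorem norm_stdAddChar (i : ZMod N) : ‖stdAddChar i‖ = 1 :=
  Circle.norm_coe _

theorem stdAddChar_ne_zero (i : ZMod N) : stdAddChar i ≠ 0 :=
  Circle.coe_ne_zero _

theorem stdAddChar_intCast_half (hN : Even N) : stdAddChar (((N : ℤ) / 2 : ℤ) : ZMod N) = -1 := by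
  obtain ⟨h, hh⟩ := hN
  have h0 : (h : ℂ) ≠ 0 := Nat.cast_ne_zero.mpr (by rintro rfl; exact NeZero.ne N (by omega))
  rw [stdAddChar_coe, show ((N : ℤ) / 2 : ℤ) = h by omega, hh, ← exp_pi_mul_I]
  congr 1
  push_cast
  field_simp
  ring

theorem FPline_eq_deltoidTangent (hN : Even N) (i : ℤ) :
    FPline N i = deltoidTangent (stdAddChar (i : ZMod N)) := by
  ext z
  set u := stdAddChar (i : ZMod N)
  have hpt : pt N ((N : ℤ) / 2 - 2 * i) = -u⁻¹ ^ 2 := by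
    rw [pt_eq_stdAddChar, Int.cast_sub, sub_eq_add_neg, AddChar.map_add_eq_mul,
      stdAddChar_intCast_half hN, show -((2 * i : ℤ) : ZMod N) = -i + -i by push_cast; ring,
      AddChar.map_add_eq_mul, AddChar.map_neg_eq_inv]
    ring
  have hinv : u * u⁻¹ = 1 := mul_inv_cancel₀ (stdAddChar_ne_zero _)
  rw [FPline, mem_lineL_iff, pt_eq_stdAddChar i, hpt]
  simp only [deltoidTangent, Set.mem_ofPred_eq]
  constructor <;> intro h
  · linear_combination h + u⁻¹ * conj z * hinv
  · linear_combination h - u⁻¹ * conj z * hinv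

theorem FPline_val_eq_deltoidTangent (hN : Even N) (i : ZMod N) :
    FPline N (i.val : ℤ) = deltoidTangent (stdAddChar i) := by
  rw [FPline_eq_deltoidTangent hN, Int.cast_natCast, natCast_zmod_val]

variable (N) in
def linesThrough (z : ℂ) : Set (ZMod N) := {i | z ∈ deltoidTangent (stdAddChar i)}

theorem linesThrough_add_add {i j k : ZMod N} (h : i + j + k = 0) :
    linesThrough N (stdAddChar i + stdAddChar j + stdAddChar k) = {i, j, k} := by
  have hprod : stdAddChar i * stdAddChar j * stdAddChar k = 1 := by
    rw [← AddChar.map_add_eq_mul, ← AddChar.map_add_eq_mul, h, AddChar.map_zero_eq_one]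
  ext l
  simp only [linesThrough, Set.mem_ofPred_eq, Set.mem_insert_iff, Set.mem_singleton_iff]
  rw [add_add_mem_deltoidTangent_iff (norm_stdAddChar i) (norm_stdAddChar j) (norm_stdAddChar k)
    (stdAddChar_ne_zero l) hprod, injective_stdAddChar.eq_iff, injective_stdAddChar.eq_iff,
    injective_stdAddChar.eq_iff]

theorem eq_add_add_of_mem_linesThrough {i j : ZMod N} {z : ℂ} (hij : i ≠ j)
    (hi : i ∈ linesThrough N z) (hj : j ∈ linesThrough N z) :
    z = stdAddChar i + stdAddChar j + stdAddChar (-i - j) := by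
  rw [eq_of_mem_deltoidTangent (stdAddChar_ne_zero i) (stdAddChar_ne_zero j)
    (injective_stdAddChar.ne hij) hi hj, ← AddChar.map_add_eq_mul, ← AddChar.map_neg_eq_inv,
    neg_add']

variable (N) in
def triples : Finset (Finset (ZMod N)) := {s ∈ univ.powersetCard 3 | ∑ m ∈ s, m = 0}

def triplePoint (s : Finset (ZMod N)) : ℂ := ∑ m ∈ s, stdAddChar m

theorem mem_triples_iff {s : Finset (ZMod N)} :
    s ∈ triples N ↔ ∃ a b c, a ≠ b ∧ a ≠ c ∧ b ≠ c ∧ a + b + c = 0 ∧ s = {a, b, c} := by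
  simp only [triples, mem_filter, mem_powersetCard, subset_univ, true_and, card_eq_three]
  constructor
  · rintro ⟨⟨a, b, c, hab, hac, hbc, rfl⟩, hsum⟩
    exact ⟨a, b, c, hab, hac, hbc, by rwa [sum_triple (fun m => m) hab hac hbc] at hsum, rfl⟩
  · rintro ⟨a, b, c, hab, hac, hbc, hsum, rfl⟩
    exact ⟨⟨a, b, c, hab, hac, hbc, rfl⟩, by rwa [sum_triple (fun m => m) hab hac hbc]⟩

theorem linesThrough_triplePoint {s : Finset (ZMod N)} (hs : s ∈ triples N) :
    linesThrough N (triplePoint s) = s := by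
  obtain ⟨a, b, c, hab, hac, hbc, hsum, rfl⟩ := mem_triples_iff.mp hs
  rw [triplePoint, sum_triple _ hab hac hbc, linesThrough_add_add hsum]
  push_cast
  rfl

theorem ncard_linesThrough_eq_three_iff {z : ℂ} :
    (linesThrough N z).ncard = 3 ↔ ∃ s ∈ triples N, triplePoint s = z := by
  constructor
  · intro h
    obtain ⟨a, b, c, hab, hac, hbc, hz⟩ := Set.ncard_eq_three.mp h
    have hza := eq_add_add_of_mem_linesThrough hab (by rw [hz]; simp) (by rw [hz]; simp)
    have hc : c ∈ linesThrough N z := by rw [hz]; simp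
    rw [hza, linesThrough_add_add (by ring)] at hc
    obtain rfl : c = -a - b := by simpa [hac.symm, hbc.symm] using hc
    exact ⟨{a, b, -a - b}, mem_triples_iff.mpr ⟨a, b, _, hab, hac, hbc, by ring, rfl⟩,
      by rw [triplePoint, sum_triple _ hab hac hbc, hza]⟩
  · rintro ⟨s, hs, rfl⟩
    rw [linesThrough_triplePoint hs, Set.ncard_coe_finset]
    exact (mem_powersetCard.mp (mem_filter.mp hs).1).2

theorem injOn_triplePoint : Set.InjOn (triplePoint (N := N)) ↑(triples N) :=
  fun s hs t ht hst => by
    rw [← coe_inj, ← linesThrough_triplePoint hs, hst, linesThrough_triplePoint ht]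

theorem ncard_triplePoints :
    {z | (linesThrough N z).ncard = 3}.ncard = (triples N).card := by
  have himage : {z | (linesThrough N z).ncard = 3} = triplePoint (N := N) '' ↑(triples N) := by
    ext z
    simp [ncard_linesThrough_eq_three_iff]
  rw [himage, injOn_triplePoint.ncard_image, Set.ncard_coe_finset]

theorem ncard_triplePoints_mem (i : ZMod N) :
    {z | (linesThrough N z).ncard = 3 ∧ i ∈ linesThrough N z}.ncard =
      {s ∈ triples N | i ∈ s}.card := by
  have himage : {z | (linesThrough N z).ncard = 3 ∧ i ∈ linesThrough N z} =
      triplePoint (N := N) '' ↑({s ∈ triples N | i ∈ s} : Finset _) := by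
    ext z
    simp only [Set.mem_ofPred_eq, ncard_linesThrough_eq_three_iff, coe_filter, Set.mem_image]
    constructor
    · rintro ⟨⟨s, hs, rfl⟩, hi⟩
      rw [linesThrough_triplePoint hs] at hi
      exact ⟨s, ⟨hs, hi⟩, rfl⟩
    · rintro ⟨s, ⟨hs, hi⟩, rfl⟩
      exact ⟨⟨s, hs, rfl⟩, by rwa [linesThrough_triplePoint hs]⟩
  rw [himage, (injOn_triplePoint.mono (filter_subset _ _)).ncard_image, Set.ncard_coe_finset]

end RootsOfUnity

theorem card_triples_twelve : (triples 12).card = 19 := by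
  decide

theorem card_triples_twelve_filter_mem (i : ZMod 12) :
    {s ∈ triples 12 | i ∈ s}.card = if i.val = 2 ∨ i.val = 6 ∨ i.val = 10 then 4 else 5 := by
  revert i
  decide

end FurediPalasti

open FurediPalasti in
/-- In the Füredi–Palásti configuration of 12 lines there are exactly 19 triple points;
the three tangent lines `L_2, L_6, L_10` (the tangents to the unit circle at `P_2, P_6,
P_10`) each contain exactly 4 triple points, and each of the remaining 9 lines contains
exactly 5 triple points. -/
theorem furedi_palasti_twelve_lines :
    let T : Set ℂ := {z : ℂ | {i : Fin 12 | z ∈ FPline 12 ((i : ℕ) : ℤ)}.ncard = 3}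
    T.ncard = 19 ∧
      ∀ i : Fin 12,
        {z ∈ T | z ∈ FPline 12 ((i : ℕ) : ℤ)}.ncard =
          if (i : ℕ) = 2 ∨ (i : ℕ) = 6 ∨ (i : ℕ) = 10 then 4 else 5 := by
  intro T
  have hL (i : Fin 12) : FPline 12 ((i : ℕ) : ℤ) = deltoidTangent (stdAddChar (N := 12) i) :=
    FPline_val_eq_deltoidTangent ⟨6, rfl⟩ i
  refine ⟨?_, fun i => ?_⟩ <;> simp only [T, hL]
  · exact (ncard_triplePoints (N := 12)).trans card_triples_twelve
  · exact (ncard_triplePoints_mem (N := 12) i).trans (card_triples_twelve_filter_mem i)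

end
end
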